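/- Let N ≥ 3 be an integer. If v ∈ ℚ^N is a rational vector lying in the topological frontier of the closure of the Tits cone T_N (that is, in the closure of T_N but not in its interior), then there exists g ∈ G_N with g·v ∈ D_N. In particular, every rational vector belonging to the closure of T_N already belongs to T_N. -/

import Mathlib

/-!
The generators of `G_N` act as the reflections `r_j v = v + 2 b(v, α_j) α_j`, so `G_N` preserves
`b`. Every vector of the `G_N`-orbit of `1 = (1, …, 1)` is reached from `1` by reflections that
raise a coordinate (reflecting in a wall with `b(v, α_j) < 0` just undoes the last such step), so it
has nonnegative coordinates. As `b(z, w) = ∑ z_k b(w, α_k)`, this gives `(N - 2) ∑ x = b(1, x) ≥ 0`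
on `T_N`, hence on its closure. A rational `v` lies in a lattice `εℤ^N` preserved by the
reflections; if `v ∉ D_N`, some wall has `b(v, α_j) ≤ -ε` and `r_j` lowers the coordinate sum by at
least `2ε`. The sum staying nonnegative, finitely many reflections bring `v` into `D_N`.
-/

open Matrix

/-- The matrix `M_{N,j}`: identity except in the `j`-th column, whose `j`-th entry
is `-1` and whose other entries are all `2`. -/
noncomputable def Mmat (N : ℕ) (j : Fin N) : Matrix (Fin N) (Fin N) ℝ :=
  Matrix.of fun i k => if k = j then (if i = j then -1 else 2) else (if i = k then 1 else 0)

/-- The matrix `B_N`: diagonal entries `-1`, off-diagonal entries `1`. -/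
noncomputable def Bmat (N : ℕ) : Matrix (Fin N) (Fin N) ℝ :=
  Matrix.of fun i k => if i = k then -1 else 1

/-- The symmetric bilinear form `b_N(v,w) = vᵗ B_N w` on `ℝ^N`. -/
noncomputable def bform (N : ℕ) (v w : Fin N → ℝ) : ℝ := v ⬝ᵥ (Bmat N).mulVec w

/-- The subgroup of `GL_N(ℝ)` generated by the transposed matrices `M_{N,j}ᵗ`. -/
noncomputable def Ggrp (N : ℕ) : Subgroup (GL (Fin N) ℝ) :=
  Subgroup.closure {g | ∃ j : Fin N, (g : Matrix (Fin N) (Fin N) ℝ) = (Mmat N j)ᵀ}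

/-- The fundamental cone `D_N = {w : b_N(w, α_i) ≥ 0 for all i}`. -/
def Dcone (N : ℕ) : Set (Fin N → ℝ) := {w | ∀ i : Fin N, 0 ≤ bform N w (Pi.single i 1)}

/-- The Tits cone `T_N = ⋃_{g ∈ G_N} g (D_N)`. -/
def Tcone (N : ℕ) : Set (Fin N → ℝ) :=
  {v | ∃ g ∈ Ggrp N, ∃ w ∈ Dcone N, v = (g : Matrix (Fin N) (Fin N) ℝ).mulVec w}

/-- The vector `c_j = u_N - (N-2) α_j`: coordinates `1` except the `j`-th which is `-(N-3)`. -/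
noncomputable def cvec (N : ℕ) (j : Fin N) : Fin N → ℝ :=
  fun i => if i = j then -((N : ℝ) - 3) else 1

/-- The integral matrix `M_{N,j}`. -/
def MmatZ (N : ℕ) (j : Fin N) : Matrix (Fin N) (Fin N) ℤ :=
  Matrix.of fun i k => if k = j then (if i = j then -1 else 2) else (if i = k then 1 else 0)

/-- The integral matrix `B_N`. -/
def BmatZ (N : ℕ) : Matrix (Fin N) (Fin N) ℤ :=
  Matrix.of fun i k => if i = k then -1 else 1

/-- The bilinear form `b_N` on `ℤ^N`. -/
def bformZ (N : ℕ) (v w : Fin N → ℤ) : ℤ := v ⬝ᵥ (BmatZ N).mulVec w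

section BilinearForm

variable {N : ℕ}

lemma Bmat_transpose : (Bmat N)ᵀ = Bmat N := by
  ext i k
  simp [Bmat, eq_comm]

lemma bform_comm (v w : Fin N → ℝ) : bform N v w = bform N w v := by
  rw [bform, bform, dotProduct_mulVec, ← mulVec_transpose, Bmat_transpose, dotProduct_comm]

lemma bform_add_smul_left (v x w : Fin N → ℝ) (c : ℝ) :
    bform N (v + c • x) w = bform N v w + c * bform N x w := by
  simp only [bform, add_dotProduct, smul_dotProduct, smul_eq_mul]

lemma Bmat_mulVec_apply (w : Fin N → ℝ) (k : Fin N) :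
    (Bmat N *ᵥ w) k = ∑ i, w i - 2 * w k := by
  simp only [mulVec, dotProduct, Bmat, of_apply, ite_mul, neg_one_mul, one_mul]
  have h : ∀ i, (if k = i then -w i else w i) = w i - 2 * if k = i then w i else 0 := by
    intro i; split_ifs <;> ring
  simp only [h, Finset.sum_sub_distrib, ← Finset.mul_sum, Finset.sum_ite_eq, Finset.mem_univ,
    if_true]

lemma bform_single_right (w : Fin N → ℝ) (k : Fin N) :
    bform N w (Pi.single k 1) = ∑ i, w i - 2 * w k := by
  rw [bform_comm, bform, single_dotProduct, one_mul, Bmat_mulVec_apply]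

lemma bform_eq_sum_mul_single (z w : Fin N → ℝ) :
    bform N z w = ∑ k, z k * bform N w (Pi.single k 1) := by
  simp only [bform_single_right]
  simp only [bform, dotProduct, Bmat_mulVec_apply]

lemma bform_one_left (w : Fin N → ℝ) : bform N 1 w = ((N : ℝ) - 2) * ∑ i, w i := by
  rw [bform_eq_sum_mul_single]
  simp only [Pi.one_apply, one_mul, bform_single_right,
    Finset.sum_sub_distrib, ← Finset.mul_sum, Finset.sum_const, Finset.card_univ, Fintype.card_fin,
    nsmul_eq_mul]
  ring

end BilinearForm

section Reflection

variable {N : ℕ}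

-- As `b(α_j, α_j) = -1`, this is the `b`-orthogonal reflection in `α_j`.
noncomputable def reflect (N : ℕ) (j : Fin N) (v : Fin N → ℝ) : Fin N → ℝ :=
  v + (2 * bform N v (Pi.single j 1)) • Pi.single j 1

lemma bform_single_single_self (j : Fin N) :
    bform N (Pi.single j 1) (Pi.single j 1) = -1 := by
  rw [bform_single_right, Finset.sum_pi_single']
  norm_num

lemma bform_reflect_single_self (j : Fin N) (v : Fin N → ℝ) :
    bform N (reflect N j v) (Pi.single j 1) = -bform N v (Pi.single j 1) := by
  rw [reflect, bform_add_smul_left, bform_single_single_self]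
  ring

lemma reflect_reflect (j : Fin N) (v : Fin N → ℝ) : reflect N j (reflect N j v) = v := by
  rw [reflect, bform_reflect_single_self, reflect, mul_neg, neg_smul, add_neg_cancel_right]

lemma bform_reflect_reflect (j : Fin N) (v w : Fin N → ℝ) :
    bform N (reflect N j v) (reflect N j w) = bform N v w := by
  have expand : ∀ x y, bform N (reflect N j x) y
      = bform N x y + 2 * bform N x (Pi.single j 1) * bform N y (Pi.single j 1) := by
    intro x y
    rw [reflect, bform_add_smul_left, bform_comm (Pi.single j 1)]
  rw [expand, bform_comm v, expand, bform_reflect_single_self, bform_comm w]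
  ring

lemma reflect_apply_self (j : Fin N) (v : Fin N → ℝ) :
    reflect N j v j = v j + 2 * bform N v (Pi.single j 1) := by
  simp [reflect]

lemma reflect_apply_of_ne {j k : Fin N} (h : k ≠ j) (v : Fin N → ℝ) : reflect N j v k = v k := by
  simp [reflect, h]

lemma sum_reflect (j : Fin N) (v : Fin N → ℝ) :
    ∑ i, reflect N j v i = ∑ i, v i + 2 * bform N v (Pi.single j 1) := by
  simp [reflect, Finset.sum_add_distrib, ← Finset.mul_sum]

lemma transpose_Mmat_mulVec (j : Fin N) (v : Fin N → ℝ) : (Mmat N j)ᵀ *ᵥ v = reflect N j v := by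
  ext k
  rcases eq_or_ne k j with rfl | hk
  · have h : ∀ i, (if i = k then -1 else 2) * v i = 2 * v i - 3 * if i = k then v i else 0 := by
      intro i; split_ifs <;> ring
    simp only [mulVec, dotProduct, transpose_apply, Mmat, of_apply, if_true, h,
      Finset.sum_sub_distrib, ← Finset.mul_sum, Finset.sum_ite_eq', Finset.mem_univ,
      reflect_apply_self, bform_single_right]
    ring
  · simp [mulVec, dotProduct, Mmat, hk.symm, reflect_apply_of_ne hk, eq_comm]

end Reflection

section ReflectionGroup

variable {N : ℕ}

lemma transpose_Mmat_mul_self (j : Fin N) : (Mmat N j)ᵀ * (Mmat N j)ᵀ = 1 :=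
  ext_iff_mulVec.2 fun v => by
    rw [← mulVec_mulVec, transpose_Mmat_mulVec, transpose_Mmat_mulVec, reflect_reflect,
      one_mulVec]

noncomputable def simpleReflection (N : ℕ) (j : Fin N) : GL (Fin N) ℝ :=
  ⟨(Mmat N j)ᵀ, (Mmat N j)ᵀ, transpose_Mmat_mul_self j, transpose_Mmat_mul_self j⟩

lemma simpleReflection_mulVec (j : Fin N) (v : Fin N → ℝ) :
    (simpleReflection N j : Matrix (Fin N) (Fin N) ℝ) *ᵥ v = reflect N j v :=
  transpose_Mmat_mulVec j v

lemma simpleReflection_inv (j : Fin N) : (simpleReflection N j)⁻¹ = simpleReflection N j := rfl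

lemma simpleReflection_mem_Ggrp (j : Fin N) : simpleReflection N j ∈ Ggrp N :=
  Subgroup.subset_closure ⟨j, rfl⟩

lemma Ggrp_eq_closure_range : Ggrp N = Subgroup.closure (Set.range (simpleReflection N)) := by
  rw [Ggrp]
  congr 1
  ext g
  simp only [Set.mem_range, Units.ext_iff]
  exact exists_congr fun _ => eq_comm

@[elab_as_elim]
lemma Ggrp_induction_left {p : GL (Fin N) ℝ → Prop} (one : p 1)
    (reflection_mul : ∀ j g, p g → p (simpleReflection N j * g)) {g : GL (Fin N) ℝ}
    (hg : g ∈ Ggrp N) : p g := by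
  rw [Ggrp_eq_closure_range] at hg
  induction hg using Subgroup.closure_induction_left with
  | one => exact one
  | mul_left x hx y _ ih =>
    obtain ⟨j, rfl⟩ := hx
    exact reflection_mul j y ih
  | inv_mul_cancel x hx y _ ih =>
    obtain ⟨j, rfl⟩ := hx
    exact simpleReflection_inv j ▸ reflection_mul j y ih

lemma bform_mulVec_mulVec {g : GL (Fin N) ℝ} (hg : g ∈ Ggrp N) (v w : Fin N → ℝ) :
    bform N ((g : Matrix (Fin N) (Fin N) ℝ) *ᵥ v) ((g : Matrix (Fin N) (Fin N) ℝ) *ᵥ w) =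
      bform N v w := by
  revert v w
  refine Ggrp_induction_left (fun v w => by rw [Units.val_one, one_mulVec, one_mulVec])
    (fun j g ih v w => ?_) hg
  rw [Units.val_mul, ← mulVec_mulVec, ← mulVec_mulVec, simpleReflection_mulVec,
    simpleReflection_mulVec, bform_reflect_reflect, ih]

lemma mulVec_mem_Tcone {g : GL (Fin N) ℝ} (hg : g ∈ Ggrp N) {x : Fin N → ℝ}
    (hx : x ∈ Tcone N) : (g : Matrix (Fin N) (Fin N) ℝ) *ᵥ x ∈ Tcone N := by
  obtain ⟨h, hh, w, hw, rfl⟩ := hx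
  exact ⟨g * h, mul_mem hg hh, w, hw, by rw [Units.val_mul, mulVec_mulVec]⟩

lemma mulVec_mem_closure_Tcone {g : GL (Fin N) ℝ} (hg : g ∈ Ggrp N) {x : Fin N → ℝ}
    (hx : x ∈ closure (Tcone N)) : (g : Matrix (Fin N) (Fin N) ℝ) *ᵥ x ∈ closure (Tcone N) :=
  map_mem_closure (Continuous.matrix_mulVec continuous_const continuous_id) hx
    fun _ => mulVec_mem_Tcone hg

end ReflectionGroup

section Orbit

variable {N : ℕ}

inductive AscendsFromOne (N : ℕ) : (Fin N → ℝ) → Prop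
  | one : AscendsFromOne N 1
  | ascend {v : Fin N → ℝ} (j : Fin N) :
      AscendsFromOne N v → 0 < bform N v (Pi.single j 1) → AscendsFromOne N (reflect N j v)

lemma add_le_sum_of_nonneg {w : Fin N → ℝ} (hw : ∀ i, 0 ≤ w i) {m j : Fin N} (h : m ≠ j) :
    w m + w j ≤ ∑ i, w i := by
  rw [← Finset.sum_pair h]
  exact Finset.sum_le_sum_of_subset_of_nonneg (Finset.subset_univ _) fun i _ _ => hw i

lemma AscendsFromOne.nonneg_and_descend (hN : 3 ≤ N) {v : Fin N → ℝ} (hv : AscendsFromOne N v) :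
    (∀ i, 0 ≤ v i) ∧
      ∀ m, bform N v (Pi.single m 1) < 0 → AscendsFromOne N (reflect N m v) := by
  induction hv with
  | one =>
    refine ⟨fun _ => zero_le_one, fun m hm => absurd hm (not_lt.2 ?_)⟩
    have : (3 : ℝ) ≤ N := by exact_mod_cast hN
    rw [bform_one_left, Finset.sum_pi_single', if_pos (Finset.mem_univ m), mul_one]
    linarith
  | @ascend w j _ hj ih =>
    obtain ⟨hw, -⟩ := ih
    refine ⟨fun k => ?_, fun m hm => ?_⟩
    · rcases eq_or_ne k j with rfl | hk
      · rw [reflect_apply_self]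
        linarith [hw k]
      · rw [reflect_apply_of_ne hk]
        exact hw k
    rcases eq_or_ne m j with rfl | hmj
    · rwa [reflect_reflect]
    · -- `b(r_j w, α_m) = b(w, α_j) + 2 (∑ w - w_m - w_j)`, which is positive
      have := add_le_sum_of_nonneg hw hmj
      rw [bform_single_right, sum_reflect, reflect_apply_of_ne hmj, bform_single_right] at hm
      rw [bform_single_right] at hj
      linarith

lemma AscendsFromOne.reflect (hN : 3 ≤ N) {v : Fin N → ℝ} (hv : AscendsFromOne N v) (j : Fin N) :
    AscendsFromOne N (reflect N j v) := by
  rcases lt_trichotomy (bform N v (Pi.single j 1)) 0 with h | h | h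
  · exact (hv.nonneg_and_descend hN).2 j h
  · rwa [_root_.reflect, h, mul_zero, zero_smul, add_zero]
  · exact hv.ascend j h

lemma ascendsFromOne_mulVec_one (hN : 3 ≤ N) {g : GL (Fin N) ℝ} (hg : g ∈ Ggrp N) :
    AscendsFromOne N ((g : Matrix (Fin N) (Fin N) ℝ) *ᵥ 1) := by
  refine Ggrp_induction_left (by rw [Units.val_one, one_mulVec]; exact .one)
    (fun j g ih => ?_) hg
  rw [Units.val_mul, ← mulVec_mulVec, simpleReflection_mulVec]
  exact ih.reflect hN j

end Orbit

section TitsCone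

variable {N : ℕ}

lemma bform_nonneg_of_mem_Dcone {z w : Fin N → ℝ} (hz : ∀ i, 0 ≤ z i) (hw : w ∈ Dcone N) :
    0 ≤ bform N z w := by
  rw [bform_eq_sum_mul_single]
  exact Finset.sum_nonneg fun k _ => mul_nonneg (hz k) (hw k)

lemma sum_nonneg_of_mem_Tcone (hN : 3 ≤ N) {x : Fin N → ℝ} (hx : x ∈ Tcone N) :
    0 ≤ ∑ i, x i := by
  obtain ⟨g, hg, w, hw, rfl⟩ := hx
  have hpos : (0 : ℝ) < N - 2 := by
    have : (3 : ℝ) ≤ N := by exact_mod_cast hN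
    linarith
  have key : bform N 1 ((g : Matrix (Fin N) (Fin N) ℝ) *ᵥ w) =
      bform N (((g⁻¹ : GL (Fin N) ℝ) : Matrix (Fin N) (Fin N) ℝ) *ᵥ 1) w := by
    rw [← bform_mulVec_mulVec (inv_mem hg) 1, mulVec_mulVec, ← Units.val_mul, inv_mul_cancel,
      Units.val_one, one_mulVec]
  have := bform_nonneg_of_mem_Dcone
    ((ascendsFromOne_mulVec_one hN (inv_mem hg)).nonneg_and_descend hN).1 hw
  rw [← key, bform_one_left] at this
  exact (mul_nonneg_iff_of_pos_left hpos).1 this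

lemma sum_nonneg_of_mem_closure_Tcone (hN : 3 ≤ N) {x : Fin N → ℝ}
    (hx : x ∈ closure (Tcone N)) : 0 ≤ ∑ i, x i :=
  closure_minimal (fun _ => sum_nonneg_of_mem_Tcone hN)
    (isClosed_le continuous_const (continuous_finsetSum _ fun i _ => continuous_apply i)) hx

end TitsCone

section Descent

open AddSubgroup (zmultiples)

lemma le_neg_of_mem_zmultiples_of_neg {K : Type*} [Field K] [LinearOrder K]
    [IsStrictOrderedRing K] {ε x : K} (hε : 0 < ε) (hx : x ∈ zmultiples ε) (h : x < 0) :
    x ≤ -ε := by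
  obtain ⟨k, rfl⟩ := AddSubgroup.mem_zmultiples_iff.1 hx
  rw [zsmul_eq_mul] at h ⊢
  have hk : (k : K) ≤ -1 := by
    have : k < 0 := by exact_mod_cast neg_of_mul_neg_left h hε.le
    exact_mod_cast Int.le_sub_one_of_lt this
  nlinarith

lemma exists_pos_forall_mem_zmultiples {ι : Type*} [Fintype ι] (v : ι → ℚ) :
    ∃ ε : ℝ, 0 < ε ∧ ∀ i, (v i : ℝ) ∈ zmultiples ε := by
  set d := ∏ i, (v i).den
  have hd : (0 : ℝ) < d := by exact_mod_cast Finset.prod_pos fun i _ => (v i).pos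
  refine ⟨1 / d, by positivity, fun i => ?_⟩
  obtain ⟨c, hc⟩ := Finset.dvd_prod_of_mem (fun i => (v i).den) (Finset.mem_univ i)
  refine AddSubgroup.mem_zmultiples_iff.2 ⟨(v i).num * c, ?_⟩
  have hc' : (d : ℝ) = (v i).den * c := by exact_mod_cast hc
  have hc0 : (c : ℝ) ≠ 0 := right_ne_zero_of_mul (hc' ▸ hd.ne')
  rw [zsmul_eq_mul, Rat.cast_def, hc']
  push_cast
  field_simp

variable {N : ℕ}

lemma bform_single_right_mem_zmultiples {ε : ℝ} {v : Fin N → ℝ}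
    (hv : ∀ i, v i ∈ zmultiples ε) (j : Fin N) : bform N v (Pi.single j 1) ∈ zmultiples ε := by
  rw [bform_single_right, two_mul]
  exact sub_mem (sum_mem fun i _ => hv i) (add_mem (hv j) (hv j))

lemma reflect_apply_mem_zmultiples {ε : ℝ} {v : Fin N → ℝ}
    (hv : ∀ i, v i ∈ zmultiples ε) (j k : Fin N) : reflect N j v k ∈ zmultiples ε := by
  rcases eq_or_ne k j with rfl | hk
  · have := bform_single_right_mem_zmultiples hv k
    rw [reflect_apply_self, two_mul]
    exact add_mem (hv k) (add_mem this this)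
  · rw [reflect_apply_of_ne hk]
    exact hv k

lemma exists_mulVec_mem_Dcone_of_mem_zmultiples (hN : 3 ≤ N) {ε : ℝ} (hε : 0 < ε)
    {v : Fin N → ℝ} (hv : ∀ i, v i ∈ zmultiples ε) (hT : v ∈ closure (Tcone N)) :
    ∃ g ∈ Ggrp N, (g : Matrix (Fin N) (Fin N) ℝ) *ᵥ v ∈ Dcone N := by
  obtain ⟨n, hn⟩ := exists_nat_gt ((∑ i, v i) / ε)
  rw [div_lt_iff₀ hε] at hn
  induction n generalizing v with
  | zero =>
    have := sum_nonneg_of_mem_closure_Tcone hN hT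
    simp only [CharP.cast_eq_zero, zero_mul] at hn
    linarith
  | succ n ih =>
    by_cases hD : v ∈ Dcone N
    · exact ⟨1, one_mem _, by rwa [Units.val_one, one_mulVec]⟩
    obtain ⟨j, hj⟩ := not_forall.1 hD
    have hdrop := le_neg_of_mem_zmultiples_of_neg hε (bform_single_right_mem_zmultiples hv j)
      (not_le.1 hj)
    have hT' : reflect N j v ∈ closure (Tcone N) := by
      simpa only [simpleReflection_mulVec] using
        mulVec_mem_closure_Tcone (simpleReflection_mem_Ggrp j) hT
    obtain ⟨g, hg, hgD⟩ := ih (reflect_apply_mem_zmultiples hv j) hT'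
      (by rw [sum_reflect]; push_cast at hn; linarith)
    refine ⟨g * simpleReflection N j, mul_mem hg (simpleReflection_mem_Ggrp j), ?_⟩
    rwa [Units.val_mul, ← mulVec_mulVec, simpleReflection_mulVec]

end Descent

/-- Every rational point of the frontier of the closure of the Tits cone can be moved
into `D_N` by an element of `G_N`; in particular every rational vector of the closure
of `T_N` belongs to `T_N`. -/
theorem stmt11 (N : ℕ) (hN : 3 ≤ N) :
    (∀ v : Fin N → ℚ,
      (fun i => (v i : ℝ)) ∈ frontier (closure (Tcone N)) →
        ∃ g ∈ Ggrp N,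
          (g : Matrix (Fin N) (Fin N) ℝ).mulVec (fun i => (v i : ℝ)) ∈ Dcone N) ∧
    (∀ v : Fin N → ℚ,
      (fun i => (v i : ℝ)) ∈ closure (Tcone N) → (fun i => (v i : ℝ)) ∈ Tcone N) := by
  have key (v : Fin N → ℚ) (hv : (fun i => (v i : ℝ)) ∈ closure (Tcone N)) :
      ∃ g ∈ Ggrp N, (g : Matrix (Fin N) (Fin N) ℝ) *ᵥ (fun i => (v i : ℝ)) ∈ Dcone N := by
    obtain ⟨ε, hε, hvε⟩ := exists_pos_forall_mem_zmultiples v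
    exact exists_mulVec_mem_Dcone_of_mem_zmultiples hN hε hvε hv
  refine ⟨fun v hv => key v ?_, fun v hv => ?_⟩
  · simpa only [closure_closure] using frontier_subset_closure hv
  · obtain ⟨g, hg, hD⟩ := key v hv
    refine ⟨g⁻¹, inv_mem hg, _, hD, ?_⟩
    rw [mulVec_mulVec, ← Units.val_mul, inv_mul_cancel, Units.val_one, one_mulVec]
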